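/- arXiv:1204.2997 — 2 statements merged into one kernel-verified Lean document; each statement's English description precedes it below -/
import Mathlib

section
/- For every 1 ≤ k ≤ n−1, the hyperbolicity cone of e_{k+1}(x_1,…,x_n) with respect to 1 = (1,…,1) is contained in the hyperbolicity cone of e_k with respect to 1: Λ₊(e_{k+1}, 1) ⊆ Λ₊(e_k, 1). -/
/-!
Write `x ∈ ℝⁿ` and `p(t) = ∏ᵢ (t + xᵢ) = ∑ⱼ e_j(x) t^{n-j}`. Its `(n-k-1)`-st derivative `g` has
degree `k+1`, coefficients that are positive multiples of `e_{k+1}(x), …, e_0(x)`, and by Rolle's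
theorem only real roots. If these coefficients are nonnegative and `g(0)` is a positive multiple of
`e_{k+1}(x) ≠ 0`, every root of `g` is negative, so by Vieta all of `e_0(x), …, e_{k+1}(x)` are
positive. Hence on `{e_{k+1} ≠ 0}` the region where `e_0, …, e_{k+1}` are all positive is relatively
open and closed; it contains `1`, so it contains the component of `1`, on which `e_k` cannot vanish.
-/

open MvPolynomial

/-- The `k`-th elementary symmetric polynomial in the variables indexed by the finite set `S`. -/
noncomputable def esymmS {n : ℕ} (S : Finset (Fin n)) (k : ℕ) : MvPolynomial (Fin n) ℝ :=
  ∑ T ∈ S.powersetCard k, ∏ j ∈ T, X j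

/-- The hyperbolicity cone: the closure of the connected component of `{x : h(x) ≠ 0}`
containing `e`. -/
noncomputable def hypCone {n : ℕ} (h : MvPolynomial (Fin n) ℝ) (e : Fin n → ℝ) :
    Set (Fin n → ℝ) :=
  closure (connectedComponentIn {x | eval x h ≠ 0} e)

open scoped Polynomial

namespace Multiset

variable {R : Type*} [CommSemiring R]

theorem esymm_eq_zero_of_card_lt {s : Multiset R} {j : ℕ} (hj : card s < j) : s.esymm j = 0 := by
  simp [esymm, powersetCard_eq_empty _ hj]

theorem esymm_nonneg [PartialOrder R] [IsOrderedRing R] {s : Multiset R} (hs : ∀ a ∈ s, 0 ≤ a)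
    (j : ℕ) : 0 ≤ s.esymm j := by
  refine sum_nonneg fun _ hx => ?_
  obtain ⟨t, ht, rfl⟩ := mem_map.1 hx
  exact prod_nonneg fun a ha => hs a (mem_of_le (mem_powersetCard.1 ht).1 ha)

theorem esymm_pos [PartialOrder R] [IsStrictOrderedRing R] {s : Multiset R} (hs : ∀ a ∈ s, 0 < a)
    {j : ℕ} (hj : j ≤ card s) : 0 < s.esymm j := by
  have hne : s.powersetCard j ≠ 0 := by
    rw [← card_pos, card_powersetCard]
    exact Nat.choose_pos hj
  simpa [esymm] using sum_lt_sum_of_nonempty (f := fun _ => (0 : R)) (g := prod) hne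
    fun t ht => prod_pos fun a ha => hs a (mem_of_le (mem_powersetCard.1 ht).1 ha)

end Multiset

namespace Polynomial

theorem eval_pos_of_coeff_nonneg {p : ℝ[X]} (hnn : ∀ i, 0 ≤ p.coeff i) (h0 : 0 < p.coeff 0)
    {r : ℝ} (hr : 0 ≤ r) : 0 < p.eval r := by
  rw [eval_eq_sum_range]
  calc 0 < p.coeff 0 * r ^ 0 := by simpa using h0
    _ ≤ ∑ i ∈ Finset.range (p.natDegree + 1), p.coeff i * r ^ i :=
      Finset.single_le_sum (fun i _ => mul_nonneg (hnn i) (pow_nonneg hr i)) (by simp)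

theorem coeff_pos_of_card_roots_eq_natDegree {p : ℝ[X]}
    (hroots : Multiset.card p.roots = p.natDegree) (hnn : ∀ i, 0 ≤ p.coeff i)
    (h0 : 0 < p.coeff 0) {i : ℕ} (hi : i ≤ p.natDegree) : 0 < p.coeff i := by
  have hp : p ≠ 0 := by
    rintro rfl
    simp at h0
  have hlead : 0 < p.leadingCoeff := (hnn _).lt_of_ne' (leadingCoeff_ne_zero.2 hp)
  have hneg : ∀ a ∈ p.roots.map Neg.neg, 0 < a := by
    simp only [Multiset.mem_map, forall_exists_index, and_imp, forall_apply_eq_imp_iff₂,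
      Left.neg_pos_iff]
    intro r hr
    by_contra! hr0
    exact (eval_pos_of_coeff_nonneg hnn h0 hr0).ne' ((mem_roots hp).1 hr)
  rw [coeff_eq_esymm_roots_of_card hroots hi, mul_assoc, ← Multiset.esymm_neg]
  exact mul_pos hlead (Multiset.esymm_pos hneg (by simp [hroots]))

theorem card_roots_iterate_derivative {p : ℝ[X]} (h : Multiset.card p.roots = p.natDegree)
    (m : ℕ) :
    Multiset.card (derivative^[m] p).roots = (derivative^[m] p).natDegree ∧
      (derivative^[m] p).natDegree = p.natDegree - m := by
  induction m with
  | zero => simpa using h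
  | succ m ih =>
    rw [Function.iterate_succ_apply']
    have := card_roots_le_derivative (derivative^[m] p)
    have := card_roots' (derivative (derivative^[m] p))
    have := natDegree_derivative_le (derivative^[m] p)
    omega

end Polynomial

theorem Multiset.esymm_pos_of_esymm_nonneg {s : Multiset ℝ} {m : ℕ}
    (hnn : ∀ j ≤ m, 0 ≤ s.esymm j) (hm : s.esymm m ≠ 0) {j : ℕ} (hj : j ≤ m) :
    0 < s.esymm j := by
  have hms : m ≤ card s := by
    by_contra! h
    exact hm (esymm_eq_zero_of_card_lt h)
  set p : ℝ[X] := (s.map fun a => Polynomial.X + Polynomial.C a).prod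
  have hp : p = ((s.map Neg.neg).map fun a => Polynomial.X - Polynomial.C a).prod := by
    simp [p, map_map]
  have hpdeg : p.natDegree = card s := by
    rw [hp, Polynomial.natDegree_multiset_prod_X_sub_C_eq_card, card_map]
  have hproots : card p.roots = p.natDegree := by
    rw [hpdeg, hp, Polynomial.roots_multiset_prod_X_sub_C, card_map]
  set d := card s - m
  obtain ⟨hgroots, hgdeg⟩ := Polynomial.card_roots_iterate_derivative hproots d
  set g := Polynomial.derivative^[d] p
  have hgcoeff : ∀ i ≤ m, g.coeff i = ((i + d).descFactorial d : ℝ) * s.esymm (m - i) := by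
    intro i hi
    rw [Polynomial.coeff_iterate_derivative, prod_X_add_C_coeff _ (by omega), nsmul_eq_mul]
    congr 2
    omega
  have hfac : ∀ i, (0 : ℝ) < (i + d).descFactorial d := fun i => by
    exact_mod_cast Nat.descFactorial_pos.2 (by omega)
  have hgnn : ∀ i, 0 ≤ g.coeff i := by
    intro i
    rcases le_or_gt i m with hi | hi
    · rw [hgcoeff i hi]
      exact mul_nonneg (hfac i).le (hnn _ (by omega))
    · exact (Polynomial.coeff_eq_zero_of_natDegree_lt (by omega)).ge
  have hg0 : 0 < g.coeff 0 := by
    rw [hgcoeff 0 m.zero_le, Nat.sub_zero]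
    exact mul_pos (hfac 0) ((hnn m le_rfl).lt_of_ne' hm)
  have hgj : 0 < g.coeff (m - j) :=
    Polynomial.coeff_pos_of_card_roots_eq_natDegree hgroots hgnn hg0 (by omega)
  rw [hgcoeff _ (by omega), Nat.sub_sub_self hj] at hgj
  exact pos_of_mul_pos_right hgj (hfac _).le

theorem connectedComponentIn_subset_connectedComponentIn_of_subset {α : Type*}
    [TopologicalSpace α] {F G : Set α} {x : α} (h : connectedComponentIn F x ⊆ G) :
    connectedComponentIn F x ⊆ connectedComponentIn G x := by
  by_cases hx : x ∈ F
  · exact isPreconnected_connectedComponentIn.subset_connectedComponentIn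
      (mem_connectedComponentIn hx) h
  · simp [connectedComponentIn_eq_empty hx]

theorem connectedComponentIn_subset_setOf_forall_pos {α ι : Type*} [TopologicalSpace α]
    [Finite ι] {f : ι → α → ℝ} (hf : ∀ i, Continuous (f i)) {F : Set α} {a : α}
    (hF : ∀ x ∈ F, (∀ i, 0 ≤ f i x) → ∀ i, 0 < f i x) (ha : ∀ i, 0 ≤ f i a) :
    connectedComponentIn F a ⊆ {x | ∀ i, 0 < f i x} := by
  by_cases haF : a ∈ F
  swap
  · simp [connectedComponentIn_eq_empty haF]
  refine isPreconnected_connectedComponentIn.subset_left_of_subset_union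
    (v := {x | ∃ i, f i x < 0}) ?_ ?_ ?_ ?_ ⟨a, mem_connectedComponentIn haF, hF a haF ha⟩
  · simp only [Set.ofPred_forall]
    exact isOpen_iInter_of_finite fun i => isOpen_lt continuous_const (hf i)
  · simp only [Set.ofPred_exists]
    exact isOpen_iUnion fun i => isOpen_lt (hf i) continuous_const
  · exact Set.disjoint_left.2 fun x hpos ⟨i, hneg⟩ => (hpos i).not_gt hneg
  · intro x hx
    by_cases hnn : ∀ i, 0 ≤ f i x
    · exact .inl (hF x (connectedComponentIn_subset F a hx) hnn)
    · push Not at hnn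
      exact .inr hnn

theorem eval_esymmS_univ {n : ℕ} (x : Fin n → ℝ) (k : ℕ) :
    eval x (esymmS Finset.univ k) = (Finset.univ.val.map x).esymm k :=
  aeval_esymm_eq_multiset_esymm (Fin n) ℝ k x

theorem hypCone_esymm_succ_subset_general {n : ℕ} (k : ℕ) :
    hypCone (esymmS (Finset.univ : Finset (Fin n)) (k + 1)) 1 ⊆
      hypCone (esymmS (Finset.univ : Finset (Fin n)) k) 1 := by
  let f : Fin (k + 2) → (Fin n → ℝ) → ℝ := fun j x => eval x (esymmS Finset.univ j)
  have hpos : connectedComponentIn {x | eval x (esymmS Finset.univ (k + 1)) ≠ 0} 1 ⊆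
      {x | ∀ j, 0 < f j x} := by
    refine connectedComponentIn_subset_setOf_forall_pos (fun j => continuous_eval _) ?_ ?_
    · intro x hx hnn j
      simp only [eval_esymmS_univ] at hx hnn ⊢
      exact Multiset.esymm_pos_of_esymm_nonneg (fun i hi => hnn ⟨i, by omega⟩) hx j.is_le
    · intro j
      simp only [eval_esymmS_univ]
      refine Multiset.esymm_nonneg (fun a ha => ?_) _
      obtain ⟨i, -, rfl⟩ := Multiset.mem_map.1 ha
      exact zero_le_one
  exact closure_mono <| connectedComponentIn_subset_connectedComponentIn_of_subset
    fun x hx => (hpos hx ⟨k, by omega⟩).ne'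

/-- For `1 ≤ k ≤ n-1`, `Λ₊(e_{k+1}, 1) ⊆ Λ₊(e_k, 1)`. -/
theorem hypCone_esymm_succ_subset {n : ℕ} (k : ℕ) (hk : 1 ≤ k) (hkn : k ≤ n - 1) :
    hypCone (esymmS (Finset.univ : Finset (Fin n)) (k + 1)) 1 ⊆
      hypCone (esymmS (Finset.univ : Finset (Fin n)) k) 1 :=
  hypCone_esymm_succ_subset_general k
end

section
/- For 1 ≤ k ≤ n−1 and any subset S ⊆ [n] with |S| ≤ k−1, the hyperbolicity cone of e_{k+1}(x_1,…,x_n) with respect to 1 is contained in the hyperbolicity cone of the polynomial ∂^S e_k (which equals e_{k−|S|} in the variables indexed by [n]\S). -/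
/-!
Write `e_j(x_T)` for the elementary symmetric polynomial in the variables indexed by `T`, so that
`∂^{Tᶜ} e_{j + |Tᶜ|} = e_j(x_T)`; in particular `∂^S e_k = e_{k-|S|}(x_{Sᶜ})`. Let `U` be the open
set where `e_j(x_T) > 0` whenever `j ≥ 1` and `j + |Tᶜ| ≤ k + 1`; it contains `1`. On the closure of
`U` all these are `≥ 0`, and none of them can vanish where `e_{k+1} ≠ 0`: since
`∑_{i ∈ T} e_j(x_{T - i}) = (|T| - j) e_j(x_T)`, a zero propagates to a pair with
`j + |Tᶜ| = k + 1`; there real-rootedness of `∏ (t + x_i)` gives `e_{j+1}(x_T) ≤ 0`, so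
`e_{j+1}(x_{T + i}) = e_{j+1}(x_T) + x_i e_j(x_T)` vanishes as well, and the zero climbs to
`e_{k+1}(x)` itself. Hence the connected component of `{e_{k+1} ≠ 0}` through `1` stays in `U`,
where `∂^S e_k > 0`.
-/

open MvPolynomial

/-- The partial derivative operator `∂^S = ∏_{j∈S} ∂/∂x_j`. -/
noncomputable def pderivS {n : ℕ} (S : Finset (Fin n)) (p : MvPolynomial (Fin n) ℝ) :
    MvPolynomial (Fin n) ℝ :=
  S.toList.foldr (fun j q => pderiv j q) p

open Finset

noncomputable def esymmOn {α R : Type*} [CommSemiring R] (T : Finset α) (y : α → R) (r : ℕ) : R :=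
  ∑ A ∈ T.powersetCard r, ∏ i ∈ A, y i

section CommSemiring

variable {α R : Type*} [CommSemiring R] (T : Finset α) (y : α → R)

@[simp]
lemma esymmOn_zero : esymmOn T y 0 = 1 := by
  simp [esymmOn]

lemma esymmOn_one : esymmOn T y 1 = ∑ i ∈ T, y i := by
  simp [esymmOn, powersetCard_one]

lemma esymmOn_card : esymmOn T y #T = ∏ i ∈ T, y i := by
  simp [esymmOn]

lemma esymmOn_of_card_lt {r : ℕ} (h : #T < r) : esymmOn T y r = 0 := by
  simp [esymmOn, powersetCard_eq_empty.2 h]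

lemma map_esymmOn {S : Type*} [CommSemiring S] (f : R →+* S) (r : ℕ) :
    f (esymmOn T y r) = esymmOn T (f ∘ y) r := by
  simp [esymmOn, map_sum, map_prod]

lemma Multiset.esymm_eq_esymmOn [DecidableEq R] (s : Multiset R) (r : ℕ) :
    s.esymm r = esymmOn (univ : Finset s) (fun i => (i : R)) r := by
  rw [esymmOn, ← esymm_map_val, Multiset.map_univ_coe]

variable [DecidableEq α]

lemma esymmOn_insert {a : α} (ha : a ∉ T) (r : ℕ) :
    esymmOn (insert a T) y (r + 1) = esymmOn T y (r + 1) + y a * esymmOn T y r := by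
  have hinj : Set.InjOn (insert a) (T.powersetCard r : Set (Finset α)) := fun A hA B hB h => by
    rw [← erase_insert (fun h' => ha (mem_powersetCard.1 hA |>.1 h')),
      ← erase_insert (fun h' => ha (mem_powersetCard.1 hB |>.1 h')), h]
  rw [esymmOn, powersetCard_succ_insert ha, sum_union, sum_image hinj, esymmOn, esymmOn, mul_sum]
  · refine congrArg _ (sum_congr rfl fun A hA => prod_insert fun h => ha ?_)
    exact (mem_powersetCard.1 hA).1 h
  · refine disjoint_left.2 fun A hA hA' => ?_
    obtain ⟨B, -, rfl⟩ := mem_image.1 hA'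
    exact ha ((mem_powersetCard.1 hA).1 (mem_insert_self a B))

lemma sum_esymmOn_erase (r : ℕ) :
    ∑ i ∈ T, esymmOn (T.erase i) y r = (#T - r) • esymmOn T y r := by
  have hfilter : ∀ i, (T.erase i).powersetCard r = (T.powersetCard r).filter (i ∉ ·) := fun i => by
    ext A
    simp only [mem_powersetCard, mem_filter, subset_erase]
    tauto
  simp_rw [esymmOn, hfilter, sum_filter]
  rw [sum_comm, smul_sum]
  refine sum_congr rfl fun A hA => ?_
  rw [← sum_filter, sum_const, ← sdiff_eq_filter, card_sdiff_of_subset (mem_powersetCard.1 hA).1,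
    (mem_powersetCard.1 hA).2]

lemma sq_sum_eq_sum_sq_add_two_mul_esymmOn_two :
    (∑ i ∈ T, y i) ^ 2 = ∑ i ∈ T, y i ^ 2 + 2 * esymmOn T y 2 := by
  induction T using Finset.induction_on with
  | empty => simp [esymmOn_of_card_lt ∅ y (show #(∅ : Finset α) < 2 by simp)]
  | insert a T ha ih =>
    rw [sum_insert ha, sum_insert ha, esymmOn_insert T y ha, esymmOn_one, add_sq, ih]
    ring

end CommSemiring

lemma esymmOn_card_sub_eq_prod_mul_esymmOn_inv {α K : Type*} [Field K] [DecidableEq α]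
    (T : Finset α) (y : α → K) (hy : ∀ i ∈ T, y i ≠ 0) {r : ℕ} (hr : r ≤ #T) :
    esymmOn T y (#T - r) = (∏ i ∈ T, y i) * esymmOn T (fun i => (y i)⁻¹) r := by
  rw [esymmOn, esymmOn, mul_sum]
  refine sum_nbij' (T \ ·) (T \ ·) (fun A hA => ?_) (fun A hA => ?_) (fun A hA => ?_)
    (fun A hA => ?_) (fun A hA => ?_) <;> simp only [mem_powersetCard] at hA ⊢
  · exact ⟨sdiff_subset, by rw [card_sdiff_of_subset hA.1]; omega⟩
  · exact ⟨sdiff_subset, by rw [card_sdiff_of_subset hA.1]; omega⟩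
  · exact Finset.sdiff_sdiff_eq_self hA.1
  · exact Finset.sdiff_sdiff_eq_self hA.1
  · have hne : ∏ i ∈ T \ A, y i ≠ 0 := prod_ne_zero_iff.2 fun i hi => hy i (mem_sdiff.1 hi).1
    rw [prod_inv_distrib, ← prod_sdiff hA.1, mul_right_comm, mul_inv_cancel₀ hne, one_mul]

section Real

variable {α : Type*} [DecidableEq α] (T : Finset α) (y : α → ℝ)

lemma esymmOn_two_neg_of_sum_eq_zero (hT : T.Nonempty) (hy : ∀ i ∈ T, y i ≠ 0)
    (h1 : ∑ i ∈ T, y i = 0) : esymmOn T y 2 < 0 := by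
  have hsq : 0 < ∑ i ∈ T, y i ^ 2 := sum_pos (fun i hi => sq_pos_of_ne_zero (hy i hi)) hT
  have := sq_sum_eq_sum_sq_add_two_mul_esymmOn_two T y
  rw [h1] at this
  linarith

-- Dividing by `∏ y` turns `e_{m-1}` and `e_{m-2}` into `e_1` and `e_2` of the reciprocals.
lemma esymmOn_card_mul_esymmOn_card_sub_two_neg (hT : 2 ≤ #T) (h1 : esymmOn T y (#T - 1) = 0)
    (h0 : esymmOn T y #T ≠ 0) : esymmOn T y #T * esymmOn T y (#T - 2) < 0 := by
  rw [esymmOn_card] at h0 ⊢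
  have hy : ∀ i ∈ T, y i ≠ 0 := fun i hi => (prod_ne_zero_iff.1 h0) i hi
  rw [esymmOn_card_sub_eq_prod_mul_esymmOn_inv T y hy (by omega), esymmOn_one, mul_eq_zero,
    or_iff_right h0] at h1
  have h2 := esymmOn_two_neg_of_sum_eq_zero T _ (card_pos.1 (by omega))
    (fun i hi => inv_ne_zero (hy i hi)) h1
  rw [esymmOn_card_sub_eq_prod_mul_esymmOn_inv T y hy (by omega), ← mul_assoc, ← sq]
  exact mul_neg_of_pos_of_neg (sq_pos_of_ne_zero h0) h2

end Real

lemma Multiset.esymm_card_mul_esymm_card_sub_two_neg (s : Multiset ℝ) (hs : 2 ≤ card s)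
    (h1 : s.esymm (card s - 1) = 0) (h0 : s.esymm (card s) ≠ 0) :
    s.esymm (card s) * s.esymm (card s - 2) < 0 := by
  classical
  simp only [Multiset.esymm_eq_esymmOn, ← Multiset.card_coe, ← card_univ] at *
  exact esymmOn_card_mul_esymmOn_card_sub_two_neg _ _ hs h1 h0

namespace Polynomial

lemma Splits.coeff_zero_mul_coeff_two_neg {p : ℝ[X]} (hp : p.Splits) (hdeg : 2 ≤ p.natDegree)
    (h1 : p.coeff 1 = 0) (h0 : p.coeff 0 ≠ 0) : p.coeff 0 * p.coeff 2 < 0 := by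
  have hroots := splits_iff_card_roots.1 hp
  have hlc : p.leadingCoeff ≠ 0 := leadingCoeff_ne_zero.2 (ne_zero_of_natDegree_gt hdeg)
  rw [coeff_eq_esymm_roots_of_card hroots (by omega : 1 ≤ _)] at h1
  rw [coeff_eq_esymm_roots_of_card hroots (Nat.zero_le _)] at h0 ⊢
  rw [coeff_eq_esymm_roots_of_card hroots hdeg]
  rw [← hroots] at h1 h0 hdeg ⊢
  have key := p.roots.esymm_card_mul_esymm_card_sub_two_neg hdeg (by simpa [hlc] using h1)
    (by simpa [hlc] using h0)
  obtain ⟨d, hd⟩ := Nat.exists_eq_add_of_le' hdeg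
  rw [hd] at key ⊢
  simp only [Nat.sub_zero, Nat.add_sub_cancel] at key ⊢
  calc _ = (p.leadingCoeff * (-1) ^ d) ^ 2 * (p.roots.esymm (d + 2) * p.roots.esymm d) := by ring
    _ < 0 := mul_neg_of_pos_of_neg (sq_pos_of_ne_zero (by simp [hlc])) key

lemma Splits.derivative {p : ℝ[X]} (hp : p.Splits) : p.derivative.Splits := by
  rw [splits_iff_card_roots] at hp ⊢
  have := card_roots_le_derivative p
  have := natDegree_derivative_le p
  have := card_roots' p.derivative
  omega

lemma Splits.iterate_derivative {p : ℝ[X]} (hp : p.Splits) (t : ℕ) :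
    (Polynomial.derivative^[t] p).Splits := by
  induction t with
  | zero => exact hp
  | succ t ih => rw [Function.iterate_succ_apply']; exact ih.derivative

end Polynomial

open Polynomial in
-- `e_r(x)` are the coefficients of `∏ (X + x_i)`; differentiating down to degree `j + 2` keeps it
-- real-rooted and brings `e_j, e_{j+1}, e_{j+2}` to the three lowest coefficients.
lemma esymmOn_add_two_nonpos {α : Type*} [DecidableEq α] (T : Finset α) (x : α → ℝ) {j : ℕ}
    (h0 : 0 ≤ esymmOn T x j) (h1 : esymmOn T x (j + 1) = 0) : esymmOn T x (j + 2) ≤ 0 := by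
  by_contra! hpos
  have hj : j + 2 ≤ #T := not_lt.1 fun h => hpos.ne' (esymmOn_of_card_lt T x h)
  set t := #T - (j + 2)
  set g := derivative^[t] (∏ i ∈ T, (Polynomial.X + Polynomial.C (x i)))
  have hcoeff : ∀ i ≤ j + 2, g.coeff i = (i + t).descFactorial t * esymmOn T x (j + 2 - i) := by
    intro i hi
    rw [coeff_iterate_derivative, Finset.prod_X_add_C_coeff _ _ (by omega), nsmul_eq_mul,
      show #T - (i + t) = j + 2 - i by omega]
    rfl
  have hc : ∀ i, (0 : ℝ) < (i + t).descFactorial t :=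
    fun i => Nat.cast_pos.2 (Nat.descFactorial_pos.2 (by omega))
  have hg : g.Splits := (Splits.prod fun i _ => Splits.X_add_C (x i)).iterate_derivative t
  have hdeg : 2 ≤ g.natDegree := by
    refine le_trans (by omega) (le_natDegree_of_ne_zero (n := j + 2) ?_)
    rw [hcoeff _ le_rfl, Nat.sub_self, esymmOn_zero, mul_one]
    exact (hc _).ne'
  have key := hg.coeff_zero_mul_coeff_two_neg hdeg (by rw [hcoeff 1 (by omega)]; simp [h1])
    (by rw [hcoeff 0 (by omega)]; exact (mul_pos (hc 0) hpos).ne')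
  rw [hcoeff 0 (by omega), hcoeff 2 (by omega), Nat.sub_zero, Nat.add_sub_cancel] at key
  exact key.not_ge (mul_nonneg (mul_pos (hc 0) hpos).le (mul_nonneg (hc 2).le h0))

lemma continuous_esymmOn {α : Type*} (T : Finset α) (j : ℕ) :
    Continuous fun x : α → ℝ => esymmOn T x j :=
  continuous_finsetSum _ fun _ _ => continuous_finsetProd _ fun i _ => continuous_apply i

section Propagation

variable {ι : Type*} [Fintype ι] [DecidableEq ι] {k : ℕ}

variable (ι k) in
def esymmPosSet : Set (ι → ℝ) :=
  {x | ∀ (T : Finset ι) (j : ℕ), 1 ≤ j → j + #Tᶜ ≤ k + 1 → 0 < esymmOn T x j}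

variable (ι k) in
def esymmNonnegSet : Set (ι → ℝ) :=
  {x | ∀ (T : Finset ι) (j : ℕ), 1 ≤ j → j + #Tᶜ ≤ k + 1 → 0 ≤ esymmOn T x j}

lemma isOpen_esymmPosSet : IsOpen (esymmPosSet ι k) := by
  have hfin : {p : Finset ι × ℕ | 1 ≤ p.2 ∧ p.2 + #p.1ᶜ ≤ k + 1}.Finite :=
    (Set.finite_univ.prod (Set.finite_Iic (k + 1))).subset fun p hp => ⟨trivial, by
      simp only [Set.mem_Iic]; exact le_trans (Nat.le_add_right _ _) hp.2⟩
  have : esymmPosSet ι k = ⋂ p ∈ {p : Finset ι × ℕ | 1 ≤ p.2 ∧ p.2 + #p.1ᶜ ≤ k + 1},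
      {x | 0 < esymmOn p.1 x p.2} := by
    ext x
    simp [esymmPosSet]
  rw [this]
  exact hfin.isOpen_biInter fun p _ => isOpen_lt continuous_const (continuous_esymmOn p.1 p.2)

lemma closure_esymmPosSet_subset : closure (esymmPosSet ι k) ⊆ esymmNonnegSet ι k := by
  refine closure_minimal (fun x hx T j hj hT => (hx T j hj hT).le) ?_
  simp only [esymmNonnegSet, Set.ofPred_forall]
  exact isClosed_iInter fun T => isClosed_iInter fun j => isClosed_iInter fun _ =>
    isClosed_iInter fun _ => isClosed_le continuous_const (continuous_esymmOn T j)

lemma one_mem_esymmPosSet (hk : k + 1 ≤ Fintype.card ι) : 1 ∈ esymmPosSet ι k := by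
  intro T j _ hT
  have : #T + #Tᶜ = Fintype.card ι := by rw [card_compl]; have := card_le_univ T; omega
  simpa [esymmOn, card_powersetCard] using Nat.choose_pos (by omega : j ≤ #T)

variable {x : ι → ℝ}

lemma esymmOn_ne_zero_of_add_card_compl_eq (hx : x ∈ esymmNonnegSet ι k)
    (hne : esymmOn univ x (k + 1) ≠ 0) {T : Finset ι} {j : ℕ} (hj : 1 ≤ j)
    (hT : j + #Tᶜ = k + 1) : esymmOn T x j ≠ 0 := by
  induction hd : #Tᶜ generalizing T j with
  | zero =>
    rw [card_eq_zero, compl_eq_empty_iff] at hd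
    subst hd
    rwa [show j = k + 1 by simpa using hT]
  | succ d ih =>
    intro hzero
    obtain ⟨i, hi⟩ := card_pos.1 (by omega : 0 < #Tᶜ)
    have hiT : i ∉ T := mem_compl.1 hi
    have hcard : #(insert i T)ᶜ = d := by rw [compl_insert, card_erase_of_mem hi, hd]; rfl
    have hprev : 0 ≤ esymmOn T x (j - 1) := by
      rcases Nat.eq_or_lt_of_le hj with rfl | h
      · simp
      · exact hx T (j - 1) (by omega) (by omega)
    have hnext : esymmOn T x (j + 1) ≤ 0 := by
      have := esymmOn_add_two_nonpos T x hprev (by rwa [Nat.sub_add_cancel hj])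
      rwa [show j - 1 + 2 = j + 1 by omega] at this
    have hins : esymmOn (insert i T) x (j + 1) = 0 := by
      refine le_antisymm ?_ (hx _ _ (by omega) (by omega))
      rwa [esymmOn_insert T x hiT, hzero, mul_zero, add_zero]
    exact ih (by omega) (by omega) hcard hins

lemma esymmOn_ne_zero_of_mem_esymmNonnegSet (hx : x ∈ esymmNonnegSet ι k)
    (hne : esymmOn univ x (k + 1) ≠ 0) {T : Finset ι} {j : ℕ} (hj : 1 ≤ j)
    (hT : j + #Tᶜ ≤ k + 1) : esymmOn T x j ≠ 0 := by
  induction hm : k + 1 - (j + #Tᶜ) generalizing T with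
  | zero => exact esymmOn_ne_zero_of_add_card_compl_eq hx hne hj (by omega)
  | succ m ih =>
    intro hzero
    have hk : k + 1 ≤ Fintype.card ι :=
      not_lt.1 fun h => hne (esymmOn_of_card_lt _ _ (by rwa [card_univ]))
    obtain ⟨i, hi⟩ : T.Nonempty := by
      rw [nonempty_iff_ne_empty]
      rintro rfl
      simp only [compl_empty, card_univ] at hT
      omega
    have hcard : #(T.erase i)ᶜ = #Tᶜ + 1 := by
      rw [compl_erase, card_insert_of_notMem (fun h => mem_compl.1 h hi)]
    have hsum := sum_esymmOn_erase T x j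
    rw [hzero, smul_zero] at hsum
    have hterms : ∀ i ∈ T, 0 ≤ esymmOn (T.erase i) x j := fun i hi =>
      hx _ _ hj (by rw [compl_erase, card_insert_of_notMem (fun h => mem_compl.1 h hi)]; omega)
    exact ih (by omega) (by omega) ((sum_eq_zero_iff_of_nonneg hterms).1 hsum i hi)

lemma mem_esymmPosSet_of_mem_esymmNonnegSet (hx : x ∈ esymmNonnegSet ι k)
    (hne : esymmOn univ x (k + 1) ≠ 0) : x ∈ esymmPosSet ι k := fun T j hj hT =>
  (hx T j hj hT).lt_of_ne' (esymmOn_ne_zero_of_mem_esymmNonnegSet hx hne hj hT)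

end Propagation

section PartialDerivatives

variable {n : ℕ}

lemma esymmS_eq_esymmOn (T : Finset (Fin n)) (r : ℕ) : esymmS T r = esymmOn T X r := rfl

lemma eval_esymmS (x : Fin n → ℝ) (T : Finset (Fin n)) (r : ℕ) :
    eval x (esymmS T r) = esymmOn T x r := by
  rw [esymmS_eq_esymmOn, map_esymmOn]
  simp only [Function.comp_def, eval_X]

lemma pderiv_prod_X_of_notMem {a : Fin n} {A : Finset (Fin n)} (ha : a ∉ A) :
    pderiv a (∏ i ∈ A, X i : MvPolynomial (Fin n) ℝ) = 0 := by
  induction A using Finset.induction_on with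
  | empty => simp
  | insert b B hb ih =>
    rw [prod_insert hb, pderiv_mul, pderiv_X_of_ne (by rintro rfl; exact ha (mem_insert_self b B)),
      ih (fun h => ha (mem_insert_of_mem h))]
    simp

lemma pderiv_esymmS_of_notMem {a : Fin n} {T : Finset (Fin n)} (ha : a ∉ T) (r : ℕ) :
    pderiv a (esymmS T r) = 0 := by
  rw [esymmS, map_sum]
  exact sum_eq_zero fun A hA => pderiv_prod_X_of_notMem fun h => ha ((mem_powersetCard.1 hA).1 h)

lemma pderiv_esymmS {a : Fin n} {T : Finset (Fin n)} (ha : a ∈ T) (r : ℕ) :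
    pderiv a (esymmS T (r + 1)) = esymmS (T.erase a) r := by
  have hT := esymmOn_insert (T.erase a) (X : Fin n → MvPolynomial (Fin n) ℝ) (notMem_erase a T) r
  rw [insert_erase ha] at hT
  simp only [← esymmS_eq_esymmOn] at hT
  rw [hT, map_add, pderiv_mul, pderiv_X_self, pderiv_esymmS_of_notMem (notMem_erase a T),
    pderiv_esymmS_of_notMem (notMem_erase a T)]
  ring

lemma foldr_pderiv_esymmS {l : List (Fin n)} (hl : l.Nodup) {T : Finset (Fin n)}
    (hlT : ∀ a ∈ l, a ∈ T) {r : ℕ} (hr : l.length ≤ r) :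
    l.foldr (fun j q => pderiv j q) (esymmS T r) = esymmS (T \ l.toFinset) (r - l.length) := by
  induction l with
  | nil => simp
  | cons a l ih =>
    rw [List.nodup_cons] at hl
    have ha : a ∈ T \ l.toFinset :=
      mem_sdiff.2 ⟨hlT a (by simp), fun h => hl.1 (List.mem_toFinset.1 h)⟩
    rw [List.foldr_cons, ih hl.2 (fun b hb => hlT b (by simp [hb])) (by simp at hr; omega),
      show r - l.length = r - (a :: l).length + 1 by simp at hr ⊢; omega, pderiv_esymmS ha,
      List.toFinset_cons, sdiff_insert]

lemma pderivS_esymmS {S T : Finset (Fin n)} (hST : S ⊆ T) {r : ℕ} (hr : #S ≤ r) :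
    pderivS S (esymmS T r) = esymmS (T \ S) (r - #S) := by
  rw [pderivS, foldr_pderiv_esymmS S.nodup_toList (fun a ha => hST (mem_toList.1 ha))
    (by rwa [length_toList]), toList_toFinset, length_toList]

end PartialDerivatives

/-- For `1 ≤ k ≤ n-1` and `S ⊆ [n]` with `|S| ≤ k-1`,
`Λ₊(e_{k+1}, 1) ⊆ Λ₊(∂^S e_k, 1)`. -/
theorem hypCone_esymm_subset_pderiv {n : ℕ} (k : ℕ) (hk : 1 ≤ k) (hkn : k ≤ n - 1)
    (S : Finset (Fin n)) (hS : S.card ≤ k - 1) :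
    hypCone (esymmS (Finset.univ : Finset (Fin n)) (k + 1)) 1 ⊆
      hypCone (pderivS S (esymmS (Finset.univ : Finset (Fin n)) k)) 1 := by
  have hn : k + 1 ≤ Fintype.card (Fin n) := by rw [Fintype.card_fin]; omega
  have h1 : (1 : Fin n → ℝ) ∈ {x | eval x (esymmS univ (k + 1)) ≠ 0} := by
    rw [Set.mem_ofPred_eq, eval_esymmS]
    exact (one_mem_esymmPosSet hn univ (k + 1) (by omega) (by simp)).ne'
  have hA : connectedComponentIn {x | eval x (esymmS univ (k + 1)) ≠ 0} 1 ⊆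
      esymmPosSet (Fin n) k :=
    isPreconnected_connectedComponentIn.subset_of_closure_inter_subset isOpen_esymmPosSet
      ⟨1, mem_connectedComponentIn h1, one_mem_esymmPosSet hn⟩ fun x ⟨hcl, hxA⟩ =>
        mem_esymmPosSet_of_mem_esymmNonnegSet (closure_esymmPosSet_subset hcl)
          (by simpa [eval_esymmS] using connectedComponentIn_subset _ _ hxA)
  have hq : esymmPosSet (Fin n) k ⊆ {x | eval x (pderivS S (esymmS univ k)) ≠ 0} :=
    fun x hx => by
      rw [Set.mem_ofPred_eq, pderivS_esymmS (subset_univ S) (by omega), eval_esymmS]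
      exact (hx _ _ (by omega) (by rw [← compl_eq_univ_sdiff, compl_compl]; omega)).ne'
  exact closure_mono (isPreconnected_connectedComponentIn.subset_connectedComponentIn
    (mem_connectedComponentIn h1) (hA.trans hq))
end
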